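/- Let L : ℝ⁴ → ℝ⁴ be the linear map given in 2×2 block form by L = [[B_N, X],[0, Y]], where B_N = diag(λ^N, λ^{−N}) with λ > 1, Y is invertible, N is a positive integer with (‖Y‖ + 1) < λ^N/100 and ‖Y^{−1}‖ < λ^N/100, and ‖X‖ < K for some K > 0. Then there exist γ₁, γ₂ > 0 such that the cone C^u(E₁,γ₁,γ₂) = {v ∈ ℝ⁴ : |v₂| ≤ γ₂|v₁| and |v₃|, |v₄| ≤ γ₁|v₁|} is L-invariant, i.e. L(C^u(E₁,γ₁,γ₂)) ⊆ C^u(E₁,γ₁,γ₂). -/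

import Mathlib

/-!
Write `μ = λ^N`; the hypothesis on `‖Y‖` forces `μ > 100`. Take `γ₁ = μ/(4K)` and `γ₂ = μ/4`.
For `v` in the cone, the tail `t = (v₃, v₄)` has `‖t‖ ≤ 2γ₁|v₁|`, so `X t` is at most `μ|v₁|/2`
and `Y t` at most `γ₁ μ|v₁|/50`. Hence `|(Lv)₁| ≥ μ|v₁|/2`, while
`|(Lv)₂| ≤ |v₁|/4 + μ|v₁|/2 ≤ γ₂ μ|v₁|/2` and `|(Lv)₃|, |(Lv)₄| ≤ γ₁ μ|v₁|/50`.
-/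

noncomputable section

namespace ConeInvariance

/-- Euclidean `ℝ²`. -/
abbrev E2 : Type := EuclideanSpace ℝ (Fin 2)

/-- Euclidean `ℝ⁴`. -/
abbrev E4 : Type := EuclideanSpace ℝ (Fin 4)

/-- The last two coordinates of a vector of `ℝ⁴`, as a vector of `ℝ²`. -/
def tail (v : E4) : E2 := (WithLp.equiv 2 (Fin 2 → ℝ)).symm ![v 2, v 3]

/-- The cone `C^u(E₁, γ₁, γ₂) = {v : |v₂| ≤ γ₂|v₁|, |v₃|,|v₄| ≤ γ₁|v₁|}` around the line
`E₁ = ℝ·e₁`. -/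
def cone (γ₁ γ₂ : ℝ) : Set E4 :=
  {v | |v 1| ≤ γ₂ * |v 0| ∧ |v 2| ≤ γ₁ * |v 0| ∧ |v 3| ≤ γ₁ * |v 0|}

theorem _root_.PiLp.norm_le_sum_norm {p : ENNReal} [Fact (1 ≤ p)] {ι : Type*} [Fintype ι]
    {β : ι → Type*} [∀ i, SeminormedAddCommGroup (β i)] (x : PiLp p β) :
    ‖x‖ ≤ ∑ i, ‖x i‖ := by
  classical
  calc ‖x‖ = ‖∑ i, PiLp.single p i (x i)‖ := by
        congr 1; ext j; simp
    _ ≤ ∑ i, ‖PiLp.single p i (x i)‖ := norm_sum_le _ _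
    _ = ∑ i, ‖x i‖ := by simp

theorem mem_cone_of_le {γ₁ γ₂ r : ℝ} (hγ₁ : 0 ≤ γ₁) (hγ₂ : 0 ≤ γ₂) {w : E4}
    (h0 : r ≤ |w 0|) (h1 : |w 1| ≤ γ₂ * r) (h2 : |w 2| ≤ γ₁ * r) (h3 : |w 3| ≤ γ₁ * r) :
    w ∈ cone γ₁ γ₂ :=
  ⟨h1.trans (by gcongr), h2.trans (by gcongr), h3.trans (by gcongr)⟩

theorem norm_tail_le_of_mem_cone {γ₁ γ₂ : ℝ} {v : E4} (hv : v ∈ cone γ₁ γ₂) :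
    ‖tail v‖ ≤ 2 * γ₁ * |v 0| := by
  have hsum := PiLp.norm_le_sum_norm (tail v)
  simp only [Fin.sum_univ_two, Real.norm_eq_abs] at hsum
  have h0 : tail v 0 = v 2 := rfl
  have h1 : tail v 1 = v 3 := rfl
  rw [h0, h1] at hsum
  linarith [hv.2.1, hv.2.2]

theorem abs_apply_tail_le_of_mem_cone {γ₁ γ₂ : ℝ} {v : E4} (hv : v ∈ cone γ₁ γ₂)
    (A : E2 →L[ℝ] E2) (i : Fin 2) :
    |A (tail v) i| ≤ ‖A‖ * (2 * γ₁ * |v 0|) :=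
  calc |A (tail v) i| ≤ ‖A (tail v)‖ := by simpa using PiLp.norm_apply_le (A (tail v)) i
    _ ≤ ‖A‖ * ‖tail v‖ := A.le_opNorm _
    _ ≤ ‖A‖ * (2 * γ₁ * |v 0|) := by gcongr; exact norm_tail_le_of_mem_cone hv

theorem half_mul_abs_le_abs_mul_add {μ x e : ℝ} (hμ : 0 ≤ μ) (he : |e| ≤ μ / 2 * |x|) :
    μ / 2 * |x| ≤ |μ * x + e| := by
  have h := abs_sub_abs_le_abs_add (μ * x) e
  rw [abs_mul, abs_of_nonneg hμ] at h
  linarith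

theorem abs_inv_mul_add_le {μ a y e : ℝ} (hμ : 5 ≤ μ) (hy : |y| ≤ μ / 4 * a)
    (he : |e| ≤ μ / 2 * a) : |μ⁻¹ * y + e| ≤ μ / 4 * (μ / 2 * a) := by
  have ha : 0 ≤ a := nonneg_of_mul_nonneg_right ((abs_nonneg y).trans hy) (by positivity)
  have hcontr : |μ⁻¹ * y| ≤ a / 4 :=
    calc |μ⁻¹ * y| = μ⁻¹ * |y| := by rw [abs_mul, abs_inv, abs_of_pos (by positivity)]
      _ ≤ μ⁻¹ * (μ / 4 * a) := by gcongr
      _ = a / 4 := by field_simp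
  have hexp : a / 4 + μ / 2 * a ≤ μ / 4 * (μ / 2 * a) := by
    nlinarith [mul_nonneg (mul_nonneg ha (by linarith : 0 ≤ μ - 5)) (by linarith : (0 : ℝ) ≤ μ)]
  linarith [abs_add_le (μ⁻¹ * y) e]

theorem cone_invariance_general
    (lam : ℝ) (N : ℕ)
    (X : E2 →L[ℝ] E2) (Y : E2 ≃L[ℝ] E2)
    (K : ℝ) (hK : 0 < K) (hX : ‖X‖ < K)
    (hY : ‖(Y : E2 →L[ℝ] E2)‖ + 1 < lam ^ N / 100)
    (L : E4 →L[ℝ] E4)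
    (hL : ∀ v : E4,
      L v 0 = lam ^ N * v 0 + X (tail v) 0 ∧
      L v 1 = lam⁻¹ ^ N * v 1 + X (tail v) 1 ∧
      L v 2 = Y (tail v) 0 ∧
      L v 3 = Y (tail v) 1) :
    ∃ γ₁ > (0 : ℝ), ∃ γ₂ > (0 : ℝ), ∀ v ∈ cone γ₁ γ₂, L v ∈ cone γ₁ γ₂ := by
  set μ := lam ^ N
  have hμ : 100 < μ := by linarith [norm_nonneg (Y : E2 →L[ℝ] E2)]
  set γ₁ := μ / (4 * K)
  have hγ₁ : 0 < γ₁ := by positivity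
  refine ⟨γ₁, hγ₁, μ / 4, by positivity, fun v hv => ?_⟩
  obtain ⟨e0, e1, e2, e3⟩ := hL v
  have hXv (i : Fin 2) : |X (tail v) i| ≤ μ / 2 * |v 0| :=
    calc |X (tail v) i| ≤ ‖X‖ * (2 * γ₁ * |v 0|) := abs_apply_tail_le_of_mem_cone hv X i
      _ ≤ K * (2 * γ₁ * |v 0|) := by gcongr
      _ = μ / 2 * |v 0| := by simp only [γ₁]; field_simp; ring
  have hYv (i : Fin 2) : |Y (tail v) i| ≤ γ₁ * (μ / 2 * |v 0|) :=
    calc |Y (tail v) i| ≤ ‖(Y : E2 →L[ℝ] E2)‖ * (2 * γ₁ * |v 0|) :=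
          abs_apply_tail_le_of_mem_cone hv (Y : E2 →L[ℝ] E2) i
      _ ≤ μ / 100 * (2 * γ₁ * |v 0|) := by gcongr; linarith
      _ ≤ γ₁ * (μ / 2 * |v 0|) := by nlinarith [mul_nonneg hγ₁.le (abs_nonneg (v 0))]
  rw [show lam⁻¹ ^ N = μ⁻¹ from inv_pow lam N] at e1
  refine mem_cone_of_le (r := μ / 2 * |v 0|) hγ₁.le (by positivity) ?_ ?_ (e2 ▸ hYv 0)
    (e3 ▸ hYv 1)
  · exact e0 ▸ half_mul_abs_le_abs_mul_add (by positivity) (hXv 0)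
  · exact e1 ▸ abs_inv_mul_add_le (by linarith) hv.1 (hXv 1)

/-- Proposition on invariance of cones, item 1. Let
`L = [[B_N, X], [0, Y]] : ℝ⁴ → ℝ⁴` in block form, with `B_N = diag(λ^N, λ^{-N})`, `λ > 1`,
`Y` invertible, `(‖Y‖+1) < λ^N/100`, `‖Y⁻¹‖ < λ^N/100` and `‖X‖ < K`. Then there are
`γ₁, γ₂ > 0` such that the cone `C^u(E₁, γ₁, γ₂)` is `L`-invariant. -/
theorem cone_invariance
    (lam : ℝ) (hlam : 1 < lam) (N : ℕ) (hN : 0 < N)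
    (X : E2 →L[ℝ] E2) (Y : E2 ≃L[ℝ] E2)
    (K : ℝ) (hK : 0 < K) (hX : ‖X‖ < K)
    (hY : ‖(Y : E2 →L[ℝ] E2)‖ + 1 < lam ^ N / 100)
    (hYinv : ‖(Y.symm : E2 →L[ℝ] E2)‖ < lam ^ N / 100)
    (L : E4 →L[ℝ] E4)
    (hL : ∀ v : E4,
      L v 0 = lam ^ N * v 0 + X (tail v) 0 ∧
      L v 1 = lam⁻¹ ^ N * v 1 + X (tail v) 1 ∧
      L v 2 = Y (tail v) 0 ∧
      L v 3 = Y (tail v) 1) :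
    ∃ γ₁ > (0 : ℝ), ∃ γ₂ > (0 : ℝ), ∀ v ∈ cone γ₁ γ₂, L v ∈ cone γ₁ γ₂ :=
  cone_invariance_general lam N X Y K hK hX hY L hL

end ConeInvariance
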